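/- Let α > 0 and define on the triangle {(t,s): -t ≤ s ≤ t, 0 ≤ t ≤ T} the function G(t,s) = (sin(αs) csc(αT) sin(α(t−T)) − cosh(αs) csch(αT) cosh(α(t−T)))/(2α), where αT ∉ πℤ. If c̄ is the smallest positive root of tan(c)tanh(c)=1 and αT = 2c̄, then G(T/2, −T/2) = 0 and ∂G/∂t(T/2, −T/2) = 0. -/

import Mathlib

/-!
With `αT = 2c` the point `(T/2, -T/2)` has `αs = α(t - T) = -c`, so the double-angle formulas
give `G = (tan c - coth c) / (4α)`, which vanishes exactly when `tan c · tanh c = 1`.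
The same substitution turns `∂G/∂t` into `α (-sin c cos c / sin 2c + sinh c cosh c / sinh 2c) / (2α)`,
whose two terms are `∓ 1/2`: the root equation forces `tan c ≠ 0` and `tanh c ≠ 0`, so
`sin 2c` and `sinh 2c` do not vanish.
-/

/-- Explicit expression of the Green's function `G_m` with `m = -α² < 0` on
the triangle `{(t,s) : -t ≤ s ≤ t}`. -/
noncomputable def gneg (α T t s : ℝ) : ℝ :=
  (Real.sin (α * s) * (1 / Real.sin (α * T)) * Real.sin (α * (t - T)) -
    Real.cosh (α * s) * (1 / Real.sinh (α * T)) * Real.cosh (α * (t - T))) /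
    (2 * α)

open Real

lemma sq_sin_div_sin_two_mul (x : ℝ) : sin x ^ 2 / sin (2 * x) = tan x / 2 := by
  rw [sin_two_mul, tan_eq_sin_div_cos]
  rcases eq_or_ne (sin x) 0 with hs | hs
  · simp [hs]
  rcases eq_or_ne (cos x) 0 with hc | hc
  · simp [hc]
  field_simp

lemma sq_cosh_div_sinh_two_mul (x : ℝ) : cosh x ^ 2 / sinh (2 * x) = (tanh x)⁻¹ / 2 := by
  rw [sinh_two_mul, tanh_eq_sinh_div_cosh]
  rcases eq_or_ne (sinh x) 0 with hs | hs
  · simp [hs]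
  have hc := (cosh_pos x).ne'
  field_simp

lemma gneg_half_neg_half {α T c : ℝ} (h : α * T = 2 * c) :
    gneg α T (T / 2) (-(T / 2)) = (tan c - (tanh c)⁻¹) / (4 * α) := by
  have hs : α * -(T / 2) = -c := by linear_combination -h / 2
  have ht : α * (T / 2 - T) = -c := by linear_combination -h / 2
  unfold gneg
  rw [hs, ht, h, sin_neg, cosh_neg]
  calc _ = (sin c ^ 2 / sin (2 * c) - cosh c ^ 2 / sinh (2 * c)) / (2 * α) := by ring
    _ = _ := by rw [sq_sin_div_sin_two_mul, sq_cosh_div_sinh_two_mul]; ring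

lemma hasDerivAt_gneg (α T s t : ℝ) :
    HasDerivAt (fun τ => gneg α T τ s)
      ((sin (α * s) * (1 / sin (α * T)) * (cos (α * (t - T)) * α) -
        cosh (α * s) * (1 / sinh (α * T)) * (sinh (α * (t - T)) * α)) / (2 * α)) t := by
  have hlin : HasDerivAt (fun τ => α * (τ - T)) α t := by
    simpa using ((hasDerivAt_id t).sub_const T).const_mul α
  exact ((((hasDerivAt_sin _).comp t hlin).const_mul _).sub
    (((hasDerivAt_cosh _).comp t hlin).const_mul _)).div_const (2 * α)

lemma deriv_gneg_half_neg_half {α T c : ℝ} (h : α * T = 2 * c) (hsin : sin c ≠ 0)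
    (hcos : cos c ≠ 0) (hc : c ≠ 0) :
    deriv (fun τ => gneg α T τ (-(T / 2))) (T / 2) = 0 := by
  have hs : α * -(T / 2) = -c := by linear_combination -h / 2
  have ht : α * (T / 2 - T) = -c := by linear_combination -h / 2
  have hsinh : sinh c ≠ 0 := sinh_ne_zero.mpr hc
  have hcosh := (cosh_pos c).ne'
  rw [(hasDerivAt_gneg α T _ _).deriv, hs, ht, h, sin_neg, cosh_neg, cos_neg, sinh_neg,
    sin_two_mul, sinh_two_mul]
  field_simp
  ring

theorem stmt11_general (α T c : ℝ) (hroot : Real.tan c * Real.tanh c = 1)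
    (hαT : α * T = 2 * c) :
    gneg α T (T / 2) (-(T / 2)) = 0 ∧
    deriv (fun τ => gneg α T τ (-(T / 2))) (T / 2) = 0 := by
  have htanh : tanh c ≠ 0 := right_ne_zero_of_mul_eq_one hroot
  obtain ⟨hsin, hcos⟩ :=
    div_ne_zero_iff.mp (tan_eq_sin_div_cos c ▸ left_ne_zero_of_mul_eq_one hroot)
  refine ⟨?_, deriv_gneg_half_neg_half hαT hsin hcos ?_⟩
  · rw [gneg_half_neg_half hαT, eq_inv_of_mul_eq_one_left hroot, sub_self, zero_div]
  · rintro rfl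
    simp at htanh

theorem stmt11 (α T c : ℝ) (hα : 0 < α) (hT : 0 < T)
    (hres : ∀ k : ℤ, α * T ≠ k * Real.pi)
    (hc : 0 < c) (hroot : Real.tan c * Real.tanh c = 1)
    (hmin : ∀ x : ℝ, 0 < x → Real.tan x * Real.tanh x = 1 → c ≤ x)
    (hαT : α * T = 2 * c) :
    gneg α T (T / 2) (-(T / 2)) = 0 ∧
    deriv (fun τ => gneg α T τ (-(T / 2))) (T / 2) = 0 :=
  stmt11_general α T c hroot hαT
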